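/- arXiv:2411.00613 — 2 statements merged into one kernel-verified Lean document; each statement's English description precedes it below -/
import Mathlib

section
/- Let a, b be coprime positive integers with a² + b² > 2, let c(t) = (e^{iat}/√2, e^{ibt}/√2) and γ = {c(t) : t ∈ ℝ} ⊂ ℂ². For each t₀ ∈ ℝ, writing (z₁, z₂) = c(t₀), let R_{t₀} : ℂ² → ℂ² be the ℝ-linear isometry R_{t₀}(w₁, w₂) = (2z₁²·conj(w₁), 2z₂²·conj(w₂)). Then the group of all ℝ-linear isometries A of ℂ² (elements of O(4)) satisfying A(γ) = γ is exactly the subgroup generated by {R_{t₀} : t₀ ∈ ℝ}. -/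
/-!
If a linear map `A` sends `γ` into itself then `A (c t) = c (s t)`, so both coordinates of
`A (c t)` have constant modulus `1/√2`. Writing an `ℝ`-linear functional on `ℂ²` as
`w ↦ α₁ w₁ + β₁ w̄₁ + α₂ w₂ + β₂ w̄₂`, such a coordinate is a trigonometric polynomial with
frequencies `±a, ±b`; after multiplying by `e^{i(a+b)t}` it is a polynomial of constant modulus
on the unit circle, hence a monomial (`p` times its reflected conjugate is `r² Xⁿ`). So the
coordinates are `λ₁ e^{ik₁t}` and `λ₂ e^{ik₂t}`, and computing `e^{iab s(t)}` from either one gives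
`b k₁ = a k₂`, i.e. `(k₁, k₂) = ±(a, b)`. Thus `A` agrees on `γ` with the rotation
`c t ↦ c (θ + t) = R_{θ/2} R_0` or with the reflection `c t ↦ c (θ - t) = R_{θ/2}`; as `a ≠ b`,
the curve spans `ℝ⁴` and `A` is that map.
-/

open Complex ComplexConjugate Polynomial Finset Real Pointwise

local notation "ℂ²" => WithLp 2 (ℂ × ℂ)

noncomputable section

theorem Circle.infinite_range_coe : (Set.range ((↑) : Circle → ℂ)).Infinite := by
  have h := (Set.Ico_infinite Real.two_pi_pos).image (Circle.exp_injOn_Ico (sub_zero _).le)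
  exact (h.image Circle.coe_injective.injOn).mono (Set.image_subset_range _ _)

theorem Circle.eq_of_forall_exp_mul_eq {x y : ℝ}
    (h : ∀ t, Circle.exp (x * t) = Circle.exp (y * t)) : x = y := by
  by_contra hxy
  apply Circle.exp_pi_ne_one
  have := h (π / (x - y))
  rwa [← div_eq_one, ← Circle.exp_sub, ← sub_mul, mul_div_cancel₀ _ (sub_ne_zero.mpr hxy)] at this

theorem Circle.mul_eq_mul_of_forall_exp_eq_mul {a b : ℕ} {k₁ k₂ : ℤ} {σ : ℝ → ℝ} {u v : Circle}
    (h₁ : ∀ t, Circle.exp (a * σ t) = u * Circle.exp (k₁ * t))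
    (h₂ : ∀ t, Circle.exp (b * σ t) = v * Circle.exp (k₂ * t)) :
    (b * k₁ : ℤ) = a * k₂ := by
  have hpow : ∀ t, u ^ b * Circle.exp (b * k₁ * t) = v ^ a * Circle.exp (a * k₂ * t) := fun t => by
    rw [mul_assoc, mul_assoc, Circle.exp_natCast_mul, Circle.exp_natCast_mul, ← mul_pow, ← mul_pow,
      ← h₁, ← h₂, ← Circle.exp_natCast_mul, ← Circle.exp_natCast_mul, mul_left_comm]
  have huv : u ^ b = v ^ a := by simpa using hpow 0
  suffices (b * k₁ : ℝ) = a * k₂ by exact_mod_cast this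
  exact Circle.eq_of_forall_exp_mul_eq fun t => mul_left_cancel (huv ▸ hpow t)

theorem Int.eq_and_eq_or_eq_neg_and_eq_neg {a b k₁ k₂ : ℤ} (ha : 0 < a) (hb : 0 < b) (hab : a ≠ b)
    (hk₁ : k₁ = a ∨ k₁ = -a ∨ k₁ = b ∨ k₁ = -b) (hk₂ : k₂ = a ∨ k₂ = -a ∨ k₂ = b ∨ k₂ = -b)
    (h : b * k₁ = a * k₂) : k₁ = a ∧ k₂ = b ∨ k₁ = -a ∧ k₂ = -b := by
  rcases hk₁ with h₁ | h₁ | h₁ | h₁ <;> rcases hk₂ with h₂ | h₂ | h₂ | h₂ <;> subst k₁ k₂ <;>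
    first
    | exact .inl ⟨rfl, rfl⟩
    | exact .inr ⟨rfl, rfl⟩
    | exfalso; rcases hab.lt_or_gt with hlt | hlt <;> nlinarith

theorem Polynomial.card_support_le_one_of_mul_eq_monomial {R : Type*} [Semiring R]
    [NoZeroDivisors R] {p q : R[X]} {n : ℕ} {r : R} (hr : r ≠ 0) (h : p * q = monomial n r) :
    #p.support ≤ 1 := by
  have hpq : p * q ≠ 0 := by simp [h, hr]
  have hdeg := natDegree_mul (left_ne_zero_of_mul hpq) (right_ne_zero_of_mul hpq)
  have htrail := natTrailingDegree_mul (left_ne_zero_of_mul hpq) (right_ne_zero_of_mul hpq)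
  rw [h, natDegree_monomial_eq n hr] at hdeg
  rw [h, natTrailingDegree_monomial hr] at htrail
  have := natTrailingDegree_le_natDegree p
  have := natTrailingDegree_le_natDegree q
  refine card_le_one.mpr fun i hi j hj => ?_
  have := le_natDegree_of_mem_supp i hi
  have := le_natDegree_of_mem_supp j hj
  have := natTrailingDegree_le_of_mem_supp i hi
  have := natTrailingDegree_le_of_mem_supp j hj
  omega

theorem Polynomial.card_support_le_one_of_forall_norm_eval_circle_eq {p : ℂ[X]} {r : ℝ}
    (h : ∀ z : Circle, ‖p.eval (z : ℂ)‖ = r) : #p.support ≤ 1 := by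
  rcases eq_or_ne r 0 with rfl | hr
  · suffices p = 0 by simp [this]
    refine eq_zero_of_infinite_isRoot p (Circle.infinite_range_coe.mono ?_)
    rintro _ ⟨z, rfl⟩
    exact norm_eq_zero.mp (h z)
  -- on the circle `conj z = z⁻¹`, so `q z = z ^ n * conj (p z)`
  set q := (reflect p.natDegree p).map (starRingEnd ℂ)
  have hpq : ∀ z : Circle, p.eval ↑z * q.eval ↑z = (r : ℂ) ^ 2 * (z : ℂ) ^ p.natDegree := by
    intro z
    let : Invertible (conj (z : ℂ)) :=
      ⟨z, by simp [mul_conj], by simp [conj_mul', Circle.norm_coe]⟩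
    have hq : q.eval ↑z * conj (z : ℂ) ^ p.natDegree = conj (p.eval ↑z) := by
      rw [eval_map, ← eval₂_hom]
      exact eval₂_reflect_mul_pow (starRingEnd ℂ) (conj (z : ℂ)) _ p le_rfl
    have hz : conj (z : ℂ) ^ p.natDegree * (z : ℂ) ^ p.natDegree = 1 := by
      simp [← mul_pow, conj_mul', Circle.norm_coe]
    have hp : p.eval ↑z * conj (p.eval ↑z) = (r : ℂ) ^ 2 := by
      rw [mul_conj', h]
    linear_combination (-(p.eval ↑z * q.eval ↑z)) * hz + (p.eval ↑z * (z : ℂ) ^ p.natDegree) * hq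
      + (z : ℂ) ^ p.natDegree * hp
  refine card_support_le_one_of_mul_eq_monomial (q := q) (n := p.natDegree)
    (pow_ne_zero 2 (ofReal_ne_zero.mpr hr)) ?_
  rw [← C_mul_X_pow_eq_monomial]
  refine eq_of_infinite_eval_eq _ _ (Circle.infinite_range_coe.mono ?_)
  rintro _ ⟨z, rfl⟩
  simp [hpq z]

theorem LinearMap.exists_eq_mul_add_mul_conj (ℓ : ℂ →ₗ[ℝ] ℂ) :
    ∃ α β : ℂ, ∀ z, ℓ z = α * z + β * conj z := by
  refine ⟨(ℓ 1 - I * ℓ I) / 2, (ℓ 1 + I * ℓ I) / 2, fun z => ?_⟩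
  have hz : z = z.re • (1 : ℂ) + z.im • I := by simp [Complex.real_smul, re_add_im]
  conv_lhs => rw [hz, map_add, map_smul, map_smul]
  conv_rhs => rw [← re_add_im z]
  simp only [Complex.real_smul, map_add, map_mul, conj_ofReal, conj_I]
  linear_combination (z.im * ℓ I : ℂ) * I_mul_I

theorem LinearMap.exists_apply_toLp_eq (L : ℂ² →ₗ[ℝ] ℂ) : ∃ α₁ β₁ α₂ β₂ : ℂ, ∀ z w,
    L (.toLp 2 (z, w)) = α₁ * z + β₁ * conj z + α₂ * w + β₂ * conj w := by
  let toLp := (WithLp.linearEquiv 2 ℝ (ℂ × ℂ)).symm.toLinearMap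
  obtain ⟨α₁, β₁, h₁⟩ := (L ∘ₗ toLp ∘ₗ .inl ℝ ℂ ℂ).exists_eq_mul_add_mul_conj
  obtain ⟨α₂, β₂, h₂⟩ := (L ∘ₗ toLp ∘ₗ .inr ℝ ℂ ℂ).exists_eq_mul_add_mul_conj
  refine ⟨α₁, β₁, α₂, β₂, fun z w => ?_⟩
  have hsplit : L (.toLp 2 (z, w)) = L (.toLp 2 (z, 0)) + L (.toLp 2 (0, w)) := by
    rw [← map_add, ← WithLp.toLp_add, Prod.mk_add_mk, add_zero, zero_add]
  rw [hsplit, add_assoc _ (α₂ * w)]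
  exact congrArg₂ (· + ·) (h₁ z) (h₂ w)

def torusKnot (a b : ℕ) (t : ℝ) : ℂ² :=
  WithLp.toLp 2 ((Circle.exp (a * t) : ℂ) / √2, (Circle.exp (b * t) : ℂ) / √2)

/-- `e^{i(a+b)t} (α₁ e^{iat} + β₁ e^{-iat} + α₂ e^{ibt} + β₂ e^{-ibt})` as a polynomial in
`e^{it}`. -/
def knotPoly (a b : ℕ) (α₁ β₁ α₂ β₂ : ℂ) : ℂ[X] :=
  C α₁ * X ^ (2 * a + b) + C β₁ * X ^ b + C α₂ * X ^ (a + 2 * b) + C β₂ * X ^ a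

theorem eval_knotPoly {a b : ℕ} {L : ℂ² →ₗ[ℝ] ℂ} {α₁ β₁ α₂ β₂ : ℂ}
    (hL : ∀ z w, L (.toLp 2 (z, w)) = α₁ * z + β₁ * conj z + α₂ * w + β₂ * conj w) (t : ℝ) :
    (knotPoly a b α₁ β₁ α₂ β₂).eval (Circle.exp t : ℂ) =
      Circle.exp ((a + b) * t) * (√2 * L (torusKnot a b t)) := by
  have hexp : ∀ n : ℕ, (Circle.exp (n * t) : ℂ) = (Circle.exp t : ℂ) ^ n := by
    simp [Circle.exp_natCast_mul]
  have hconj : ∀ n : ℕ, (Circle.exp t : ℂ) ^ n * conj (Circle.exp t : ℂ) ^ n = 1 := by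
    simp [← mul_pow, mul_conj']
  have hsqrt : (√2 : ℂ) * (√2 : ℂ)⁻¹ = 1 := mul_inv_cancel₀ (by simp)
  rw [show ((a : ℝ) + b) = ((a + b : ℕ) : ℝ) by push_cast; ring, hexp, torusKnot, hexp, hexp, hL]
  simp only [knotPoly, eval_add, eval_mul, eval_C, eval_pow, eval_X, map_div₀, map_pow,
    conj_ofReal]
  set u : ℂ := (Circle.exp t : ℂ)
  linear_combination
    (-(α₁ * u ^ (2 * a + b) + β₁ * u ^ b + α₂ * u ^ (a + 2 * b) + β₂ * u ^ a)) * hsqrt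
      - β₁ * u ^ b * (√2 * (√2 : ℂ)⁻¹) * hconj a - β₂ * u ^ a * (√2 * (√2 : ℂ)⁻¹) * hconj b

theorem mem_support_knotPoly {a b m : ℕ} {α₁ β₁ α₂ β₂ : ℂ}
    (hm : m ∈ (knotPoly a b α₁ β₁ α₂ β₂).support) :
    m = 2 * a + b ∨ m = b ∨ m = a + 2 * b ∨ m = a := by
  contrapose! hm
  simp [knotPoly, hm.1, hm.2.1, hm.2.2.1, hm.2.2.2]

theorem knotPoly_eq_zero_iff {a b : ℕ} (ha : 0 < a) (hb : 0 < b) (hab : a ≠ b)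
    {α₁ β₁ α₂ β₂ : ℂ} :
    knotPoly a b α₁ β₁ α₂ β₂ = 0 ↔ α₁ = 0 ∧ β₁ = 0 ∧ α₂ = 0 ∧ β₂ = 0 := by
  refine ⟨fun h => ?_, fun ⟨h₁, h₂, h₃, h₄⟩ => by simp [knotPoly, h₁, h₂, h₃, h₄]⟩
  have hcoeff := fun m => congrArg (coeff · m) h
  simp only [knotPoly, coeff_add, coeff_C_mul_X_pow, coeff_zero] at hcoeff
  refine ⟨?_, ?_, ?_, ?_⟩
  · simpa (disch := omega) only [if_neg, if_true, add_zero, zero_add] using hcoeff (2 * a + b)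
  · simpa (disch := omega) only [if_neg, if_true, add_zero, zero_add] using hcoeff b
  · simpa (disch := omega) only [if_neg, if_true, add_zero, zero_add] using hcoeff (a + 2 * b)
  · simpa (disch := omega) only [if_neg, if_true, add_zero, zero_add] using hcoeff a

theorem LinearMap.eq_zero_of_forall_torusKnot {a b : ℕ} (ha : 0 < a) (hb : 0 < b) (hab : a ≠ b)
    {L : ℂ² →ₗ[ℝ] ℂ} (h : ∀ t, L (torusKnot a b t) = 0) : L = 0 := by
  obtain ⟨α₁, β₁, α₂, β₂, hL⟩ := L.exists_apply_toLp_eq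
  have hP : knotPoly a b α₁ β₁ α₂ β₂ = 0 := by
    refine eq_zero_of_infinite_isRoot _ (Circle.infinite_range_coe.mono ?_)
    rintro _ ⟨z, rfl⟩
    rw [Set.mem_ofPred_eq, ← Circle.exp_arg z, IsRoot.def, eval_knotPoly hL, h, mul_zero, mul_zero]
  obtain ⟨rfl, rfl, rfl, rfl⟩ := (knotPoly_eq_zero_iff ha hb hab).mp hP
  ext ⟨z, w⟩
  simp [hL]

theorem span_range_torusKnot {a b : ℕ} (ha : 0 < a) (hb : 0 < b) (hab : a ≠ b) :
    Submodule.span ℝ (Set.range (torusKnot a b)) = ⊤ := by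
  by_contra hne
  obtain ⟨f, hf, hle⟩ := Submodule.exists_le_ker_of_lt_top _ (lt_top_iff_ne_top.mpr hne)
  have := LinearMap.eq_zero_of_forall_torusKnot ha hb hab (L := ofRealCLM.toLinearMap ∘ₗ f)
    fun t => by simpa using hle (Submodule.subset_span ⟨t, rfl⟩)
  exact hf (LinearMap.ext fun x => by simpa using LinearMap.congr_fun this x)

theorem exists_frequency_of_forall_norm_eq {a b : ℕ} {L : ℂ² →ₗ[ℝ] ℂ} {r : ℝ}
    (h : ∀ t, ‖L (torusKnot a b t)‖ = r) :
    ∃ k : ℤ, (k = a ∨ k = -a ∨ k = b ∨ k = -b) ∧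
      ∀ t, L (torusKnot a b t) = L (torusKnot a b 0) * Circle.exp (k * t) := by
  obtain ⟨α₁, β₁, α₂, β₂, hL⟩ := L.exists_apply_toLp_eq
  have hP : ∀ z : Circle, ‖(knotPoly a b α₁ β₁ α₂ β₂).eval (z : ℂ)‖ = √2 * r := by
    intro z
    rw [← Circle.exp_arg z, eval_knotPoly hL, norm_mul, Circle.norm_coe, norm_mul, h, one_mul]
    simp
  obtain ⟨m, c, hmc⟩ := card_support_le_one_iff_monomial.mp
    (card_support_le_one_of_forall_norm_eval_circle_eq hP)
  have hmono : ∀ t : ℝ, (Circle.exp ((a + b) * t) : ℂ) * (√2 * L (torusKnot a b t)) =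
      c * (Circle.exp (m * t) : ℂ) := fun t => by
    rw [← eval_knotPoly hL, hmc, eval_monomial, Circle.exp_natCast_mul, Circle.coe_pow]
  have hsqrt : (√2 : ℂ) ≠ 0 := by simp
  by_cases hc : c = 0
  · have hzero : ∀ t, L (torusKnot a b t) = 0 := fun t => by simpa [hc, hsqrt] using hmono t
    exact ⟨a, .inl rfl, fun t => by simp [hzero]⟩
  refine ⟨m - (a + b), ?_, fun t => ?_⟩
  · have hm : m ∈ (knotPoly a b α₁ β₁ α₂ β₂).support := by simp [hmc, hc]
    rcases mem_support_knotPoly hm with rfl | rfl | rfl | rfl <;> push_cast <;> omega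
  have h₀ : √2 * L (torusKnot a b 0) = c := by simpa using hmono 0
  have hexp : (Circle.exp (m * t) : ℂ) =
      Circle.exp ((a + b) * t) * Circle.exp ((m - (a + b) : ℤ) * t) := by
    rw [← Circle.coe_mul, ← Circle.exp_add]
    push_cast
    ring_nf
  have ht := hmono t
  rw [hexp, ← h₀, mul_left_comm (c := (Circle.exp _ : ℂ)), mul_assoc] at ht
  exact mul_left_cancel₀ hsqrt (mul_left_cancel₀ (Circle.coe_ne_zero _) ht)

theorem torusKnot_eq_toLp_mul_iff {a b : ℕ} {x y : ℝ} {u v : Circle} :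
    torusKnot a b x = .toLp 2 ((torusKnot a b y).fst * u, (torusKnot a b y).snd * v) ↔
      Circle.exp (a * x) = Circle.exp (a * y) * u ∧
        Circle.exp (b * x) = Circle.exp (b * y) * v := by
  have hsqrt : (√2 : ℂ) ≠ 0 := by simp
  simp only [torusKnot, WithLp.toLp_fst, WithLp.toLp_snd, (WithLp.toLp_injective 2).eq_iff,
    Prod.mk.injEq, div_mul_eq_mul_div, div_left_inj' hsqrt, ← Circle.coe_mul, Circle.coe_inj]

theorem exists_forall_eq_torusKnot_add_or_sub {a b : ℕ} (ha : 0 < a) (hb : 0 < b) (hab : a ≠ b)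
    {A : ℂ² →ₗ[ℝ] ℂ²} (hA : Set.MapsTo A (Set.range (torusKnot a b)) (Set.range (torusKnot a b))) :
    ∃ θ, (∀ t, A (torusKnot a b t) = torusKnot a b (θ + t)) ∨
      ∀ t, A (torusKnot a b t) = torusKnot a b (θ - t) := by
  choose s hs using fun t => hA (Set.mem_range_self t)
  obtain ⟨k₁, hk₁, h₁⟩ := exists_frequency_of_forall_norm_eq
    (L := WithLp.fstₗ 2 ℝ ℂ ℂ ∘ₗ A) (r := (√2)⁻¹) fun t => by
      rw [LinearMap.comp_apply, ← hs]; simp [torusKnot]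
  obtain ⟨k₂, hk₂, h₂⟩ := exists_frequency_of_forall_norm_eq
    (L := WithLp.sndₗ 2 ℝ ℂ ℂ ∘ₗ A) (r := (√2)⁻¹) fun t => by
      rw [LinearMap.comp_apply, ← hs]; simp [torusKnot]
  have hAt : ∀ t, A (torusKnot a b t) = .toLp 2 ((torusKnot a b (s 0)).fst * Circle.exp (k₁ * t),
      (torusKnot a b (s 0)).snd * Circle.exp (k₂ * t)) := fun t => by
    rw [hs 0]
    exact (WithLp.ext_iff 2).mpr (Prod.ext (h₁ t) (h₂ t))
  have hexp := fun t => torusKnot_eq_toLp_mul_iff.mp ((hs t).trans (hAt t))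
  have hk := Circle.mul_eq_mul_of_forall_exp_eq_mul (fun t => (hexp t).1) (fun t => (hexp t).2)
  refine ⟨s 0, ?_⟩
  rcases Int.eq_and_eq_or_eq_neg_and_eq_neg (by omega) (by omega) (by omega) hk₁ hk₂ hk with
    ⟨rfl, rfl⟩ | ⟨rfl, rfl⟩
  · refine .inl fun t => (hAt t).trans (torusKnot_eq_toLp_mul_iff.mpr ?_).symm
    push_cast
    simp only [mul_add, Circle.exp_add, and_self]
  · refine .inr fun t => (hAt t).trans (torusKnot_eq_toLp_mul_iff.mpr ?_).symm
    push_cast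
    simp only [mul_sub, Circle.exp_sub, div_eq_mul_inv, ← Circle.exp_neg, neg_mul, and_self]

def torusKnotRotation (a b : ℕ) (θ : ℝ) : ℂ² ≃ₗᵢ[ℝ] ℂ² :=
  .withLpProdCongr 2 (rotation (Circle.exp (a * θ))) (rotation (Circle.exp (b * θ)))

/-- `c t ↦ c (θ - t)`; the reflection `R_{t₀}` of the statement is
`torusKnotReflection a b (2 * t₀)`. -/
def torusKnotReflection (a b : ℕ) (θ : ℝ) : ℂ² ≃ₗᵢ[ℝ] ℂ² :=
  .withLpProdCongr 2 (conjLIE.trans (rotation (Circle.exp (a * θ))))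
    (conjLIE.trans (rotation (Circle.exp (b * θ))))

theorem torusKnotRotation_apply (a b : ℕ) (θ : ℝ) (z w : ℂ) :
    torusKnotRotation a b θ (.toLp 2 (z, w)) =
      .toLp 2 (Circle.exp (a * θ) * z, Circle.exp (b * θ) * w) := by
  simp only [torusKnotRotation, LinearIsometryEquiv.withLpProdCongr_apply, WithLp.toLp_fst,
    WithLp.toLp_snd, rotation_apply]

theorem torusKnotReflection_apply (a b : ℕ) (θ : ℝ) (z w : ℂ) :
    torusKnotReflection a b θ (.toLp 2 (z, w)) =
      .toLp 2 (Circle.exp (a * θ) * conj z, Circle.exp (b * θ) * conj w) := by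
  simp only [torusKnotReflection, LinearIsometryEquiv.withLpProdCongr_apply, WithLp.toLp_fst,
    WithLp.toLp_snd, LinearIsometryEquiv.trans_apply, conjLIE_apply, rotation_apply]

theorem torusKnotRotation_apply_torusKnot (a b : ℕ) (θ t : ℝ) :
    torusKnotRotation a b θ (torusKnot a b t) = torusKnot a b (θ + t) := by
  simp only [torusKnot, torusKnotRotation_apply, mul_add, Circle.exp_add, Circle.coe_mul,
    mul_div_assoc]

theorem torusKnotReflection_apply_torusKnot (a b : ℕ) (θ t : ℝ) :
    torusKnotReflection a b θ (torusKnot a b t) = torusKnot a b (θ - t) := by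
  simp only [torusKnot, torusKnotReflection_apply, mul_sub, Circle.exp_sub, div_eq_mul_inv,
    Circle.coe_mul, Circle.coe_inv_eq_conj, map_mul, map_inv₀, conj_ofReal, mul_assoc]

theorem torusKnotReflection_mul_torusKnotReflection_zero (a b : ℕ) (θ : ℝ) :
    torusKnotReflection a b θ * torusKnotReflection a b 0 = torusKnotRotation a b θ := by
  ext ⟨z, w⟩
  simp [torusKnotReflection_apply, torusKnotRotation_apply]

theorem torusKnotReflection_two_mul_apply (a b : ℕ) (t₀ : ℝ) (w : ℂ × ℂ) :
    torusKnotReflection a b (2 * t₀) (.toLp 2 w) =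
      .toLp 2 (2 * (Complex.exp (((a : ℝ) * t₀ : ℝ) * I) / √2) ^ 2 * conj w.1,
        2 * (Complex.exp (((b : ℝ) * t₀ : ℝ) * I) / √2) ^ 2 * conj w.2) := by
  have hsq : ∀ x : ℝ, 2 * (Complex.exp (x * I) / √2) ^ 2 = Circle.exp (2 * x) := fun x => by
    rw [div_pow, ← ofReal_pow, Real.sq_sqrt zero_le_two, Circle.coe_exp, ← Complex.exp_nat_mul]
    push_cast
    field_simp
  rw [hsq, hsq, mul_left_comm 2 (a : ℝ), mul_left_comm 2 (b : ℝ), ← torusKnotReflection_apply]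

theorem eq_torusKnotRotation_or_eq_torusKnotReflection {a b : ℕ} (ha : 0 < a) (hb : 0 < b)
    (hab : a ≠ b) {A : ℂ² →ₗ[ℝ] ℂ²}
    (hA : Set.MapsTo A (Set.range (torusKnot a b)) (Set.range (torusKnot a b))) :
    ∃ θ, ⇑A = torusKnotRotation a b θ ∨ ⇑A = torusKnotReflection a b θ := by
  have hspan := span_range_torusKnot ha hb hab
  obtain ⟨θ, h | h⟩ := exists_forall_eq_torusKnot_add_or_sub ha hb hab hA
  · refine ⟨θ, .inl (congrArg DFunLike.coe (LinearMap.ext_on_range hspan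
      (g := (torusKnotRotation a b θ).toLinearEquiv.toLinearMap) fun t => ?_))⟩
    exact (h t).trans (torusKnotRotation_apply_torusKnot a b θ t).symm
  · refine ⟨θ, .inr (congrArg DFunLike.coe (LinearMap.ext_on_range hspan
      (g := (torusKnotReflection a b θ).toLinearEquiv.toLinearMap) fun t => ?_))⟩
    exact (h t).trans (torusKnotReflection_apply_torusKnot a b θ t).symm

instance LinearIsometryEquiv.applyMulAction {R E : Type*} [Semiring R] [SeminormedAddCommGroup E]
    [Module R E] : MulAction (E ≃ₗᵢ[R] E) E where
  smul A x := A x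
  one_smul _ := rfl
  mul_smul _ _ _ := rfl

theorem torusKnotReflection_image_range_torusKnot (a b : ℕ) (θ : ℝ) :
    torusKnotReflection a b θ '' Set.range (torusKnot a b) = Set.range (torusKnot a b) := by
  have hcomp : torusKnotReflection a b θ ∘ torusKnot a b = torusKnot a b ∘ Equiv.subLeft θ :=
    funext (torusKnotReflection_apply_torusKnot a b θ)
  rw [← Set.range_comp, hcomp, (Equiv.subLeft θ).surjective.range_comp]

theorem stabilizer_range_torusKnot {a b : ℕ} (ha : 0 < a) (hb : 0 < b) (hab : a ≠ b) :
    MulAction.stabilizer (ℂ² ≃ₗᵢ[ℝ] ℂ²) (Set.range (torusKnot a b)) =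
      Subgroup.closure (Set.range (torusKnotReflection a b)) := by
  refine le_antisymm (fun A hA => ?_) ((Subgroup.closure_le _).mpr ?_)
  · replace hA : A '' Set.range (torusKnot a b) = Set.range (torusKnot a b) := hA
    obtain ⟨θ, hθ | hθ⟩ := eq_torusKnotRotation_or_eq_torusKnotReflection ha hb hab
      (A := A.toLinearEquiv.toLinearMap) fun _ hx => hA ▸ Set.mem_image_of_mem A hx
    · rw [LinearIsometryEquiv.ext (congrFun hθ), ← torusKnotReflection_mul_torusKnotReflection_zero]
      exact mul_mem (Subgroup.subset_closure ⟨θ, rfl⟩) (Subgroup.subset_closure ⟨0, rfl⟩)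
    · rw [LinearIsometryEquiv.ext (congrFun hθ)]
      exact Subgroup.subset_closure ⟨θ, rfl⟩
  · rintro _ ⟨θ, rfl⟩
    exact torusKnotReflection_image_range_torusKnot a b θ

end

/-- For coprime positive integers `a, b` with `a² + b² > 2`, the group of
all ℝ-linear isometries of `ℂ²` (with the Euclidean structure `WithLp 2 (ℂ × ℂ)`, i.e.
elements of `O(4)`) preserving the `(a,b)`-torus knot `γ` is exactly the subgroup generated
by the reflections `R_{t₀}(w₁, w₂) = (2z₁² conj w₁, 2z₂² conj w₂)`, `(z₁, z₂) = c t₀`. -/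
theorem torus_knot_symmetry_group_eq_closure_of_reflections
    (a b : ℕ) (ha : 0 < a) (hb : 0 < b) (hab : Nat.Coprime a b)
    (hv : 2 < (a : ℝ) ^ 2 + (b : ℝ) ^ 2)
    (c : ℝ → WithLp 2 (ℂ × ℂ))
    (hc : ∀ t : ℝ, c t = (WithLp.equiv 2 (ℂ × ℂ)).symm
      (Complex.exp (((a : ℝ) * t : ℝ) * Complex.I) / Real.sqrt 2,
       Complex.exp (((b : ℝ) * t : ℝ) * Complex.I) / Real.sqrt 2))
    (γ : Set (WithLp 2 (ℂ × ℂ))) (hγ : γ = Set.range c)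
    (Refl : Set (WithLp 2 (ℂ × ℂ) ≃ₗᵢ[ℝ] WithLp 2 (ℂ × ℂ)))
    (hRefl : Refl = {A | ∃ t₀ : ℝ, ∀ w : ℂ × ℂ,
        A ((WithLp.equiv 2 (ℂ × ℂ)).symm w) = (WithLp.equiv 2 (ℂ × ℂ)).symm
          (2 * (Complex.exp (((a : ℝ) * t₀ : ℝ) * Complex.I) / Real.sqrt 2) ^ 2
              * (starRingEnd ℂ) w.1,
           2 * (Complex.exp (((b : ℝ) * t₀ : ℝ) * Complex.I) / Real.sqrt 2) ^ 2
              * (starRingEnd ℂ) w.2)}) :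
    {A : WithLp 2 (ℂ × ℂ) ≃ₗᵢ[ℝ] WithLp 2 (ℂ × ℂ) | A '' γ = γ}
      = ↑(Subgroup.closure Refl) := by
  have hne : a ≠ b := by
    rintro rfl
    obtain rfl : a = 1 := by rwa [Nat.Coprime, Nat.gcd_self] at hab
    norm_num at hv
  obtain rfl : c = torusKnot a b := funext hc
  have hRefl' : Refl = Set.range (torusKnotReflection a b) := by
    subst hRefl
    ext A
    constructor
    · rintro ⟨t₀, h⟩
      exact ⟨2 * t₀, LinearIsometryEquiv.ext fun x =>
        (torusKnotReflection_two_mul_apply a b t₀ x.ofLp).trans (h x.ofLp).symm⟩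
    · rintro ⟨θ, rfl⟩
      refine ⟨θ / 2, fun w => ?_⟩
      have := torusKnotReflection_two_mul_apply a b (θ / 2) w
      rwa [mul_div_cancel₀ θ two_ne_zero] at this
  rw [hγ, hRefl', ← stabilizer_range_torusKnot ha hb hne]
  rfl
end

section
/- Let α, β, γ, δ ∈ ℝ and let u : ℝ² → ℝ be given by u(x, y) = α·cos(2x) + β·sin(2x) + γ·cos(2y) + δ·sin(2y). Suppose u(−z) = u(z) for all z ∈ ℝ², and suppose there exists p = (p₁, p₂) ∈ ℝ² with 2p₁ ∉ πℤ and 2p₂ ∉ πℤ such that u(2p − z) = u(z) for all z ∈ ℝ². Then u is identically zero. -/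
/-- If `u(x,y) = α cos 2x + β sin 2x + γ cos 2y + δ sin 2y` is even
about the origin and also even about a point `p = (p₁, p₂)` with `2p₁ ∉ πℤ` and
`2p₂ ∉ πℤ` (i.e. `u(2p − z) = u(z)` for all `z`), then `u` is identically zero. -/
theorem jacobi_kernel_symmetric_trivial
    (α β γ δ : ℝ) (u : ℝ × ℝ → ℝ)
    (hu : ∀ x y : ℝ,
      u (x, y) = α * Real.cos (2 * x) + β * Real.sin (2 * x)
        + γ * Real.cos (2 * y) + δ * Real.sin (2 * y))
    (heven : ∀ z : ℝ × ℝ, u (-z) = u z)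
    (p : ℝ × ℝ)
    (hp1 : ¬ ∃ k : ℤ, 2 * p.1 = Real.pi * k)
    (hp2 : ¬ ∃ k : ℤ, 2 * p.2 = Real.pi * k)
    (hrefl : ∀ z : ℝ × ℝ, u ((2 : ℝ) • p - z) = u z) :
    ∀ z : ℝ × ℝ, u z = 0 := by
  -- β = 0 and δ = 0 from evenness
  have hβ : β = 0 := by
    have h := heven (Real.pi / 4, 0)
    have h1 := hu (Real.pi / 4) 0
    have h2 := hu (-(Real.pi / 4)) (-0)
    have hpre : (-(Real.pi / 4, (0:ℝ)) : ℝ × ℝ) = (-(Real.pi / 4), -0) := by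
      simp [Prod.neg_mk]
    rw [hpre, h2, h1] at h
    have e1 : 2 * (Real.pi / 4) = Real.pi / 2 := by ring
    rw [e1] at h
    have e2 : 2 * -(Real.pi / 4) = -(Real.pi / 2) := by ring
    rw [e2] at h
    simp [Real.sin_pi_div_two, Real.cos_neg, Real.sin_neg] at h
    linarith
  have hδ : δ = 0 := by
    have h := heven (0, Real.pi / 4)
    have h1 := hu 0 (Real.pi / 4)
    have h2 := hu (-0) (-(Real.pi / 4))
    have hpre : (-((0:ℝ), Real.pi / 4) : ℝ × ℝ) = (-0, -(Real.pi / 4)) := by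
      simp [Prod.neg_mk]
    rw [hpre, h2, h1] at h
    have e1 : 2 * (Real.pi / 4) = Real.pi / 2 := by ring
    rw [e1] at h
    have e2 : 2 * -(Real.pi / 4) = -(Real.pi / 2) := by ring
    rw [e2] at h
    simp [Real.sin_pi_div_two, Real.cos_neg, Real.sin_neg] at h
    linarith
  subst hβ; subst hδ
  -- key: for all x, α * cos (4p₁ - 2x) = α * cos 2x
  have key1 : ∀ x : ℝ, α * Real.cos (2 * (2 * p.1 - x)) = α * Real.cos (2 * x) := by
    intro x
    have h := hrefl (x, p.2)
    have hpre : ((2 : ℝ) • p - (x, p.2) : ℝ × ℝ) = (2 * p.1 - x, p.2) := by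
      ext <;> simp [Prod.smul_mk] <;> ring
    rw [hpre, hu, hu] at h
    linarith
  have key2 : ∀ y : ℝ, γ * Real.cos (2 * (2 * p.2 - y)) = γ * Real.cos (2 * y) := by
    intro y
    have h := hrefl (p.1, y)
    have hpre : ((2 : ℝ) • p - (p.1, y) : ℝ × ℝ) = (2 * p.1 - p.1, 2 * p.2 - y) := by
      ext <;> simp [Prod.smul_mk]
    have e : 2 * p.1 - p.1 = p.1 := by ring
    rw [e] at hpre
    rw [hpre, hu, hu] at h
    linarith
  have hα : α = 0 := by
    by_contra hα
    have h0 := key1 0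
    have h1 := key1 (Real.pi / 4)
    have e0 : 2 * (2 * p.1 - 0) = 4 * p.1 := by ring
    have e1 : 2 * (2 * p.1 - Real.pi / 4) = 4 * p.1 - Real.pi / 2 := by ring
    rw [e0, show (2:ℝ) * 0 = 0 by ring, Real.cos_zero, mul_one] at h0
    have e2 : 2 * (Real.pi / 4) = Real.pi / 2 := by ring
    rw [e1, e2, Real.cos_pi_div_two, mul_zero] at h1
    have hc : Real.cos (4 * p.1) = 1 := mul_left_cancel₀ hα (by rw [mul_one]; exact h0)
    have hcs := Real.cos_sub (4 * p.1) (Real.pi / 2)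
    rw [Real.cos_pi_div_two, Real.sin_pi_div_two] at hcs
    have hs : Real.sin (4 * p.1) = 0 := by
      have : α * Real.sin (4 * p.1) = 0 := by rw [← h1, hcs]; ring
      rcases mul_eq_zero.mp this with h | h
      · exact absurd h hα
      · exact h
    obtain ⟨n, hn⟩ := (Real.cos_eq_one_iff _).mp hc
    exact hp1 ⟨n, by push_cast; linarith⟩
  have hγ : γ = 0 := by
    by_contra hγ
    have h0 := key2 0
    have h1 := key2 (Real.pi / 4)
    have e0 : 2 * (2 * p.2 - 0) = 4 * p.2 := by ring
    have e1 : 2 * (2 * p.2 - Real.pi / 4) = 4 * p.2 - Real.pi / 2 := by ring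
    rw [e0, show (2:ℝ) * 0 = 0 by ring, Real.cos_zero, mul_one] at h0
    have e2 : 2 * (Real.pi / 4) = Real.pi / 2 := by ring
    rw [e1, e2, Real.cos_pi_div_two, mul_zero] at h1
    have hc : Real.cos (4 * p.2) = 1 := mul_left_cancel₀ hγ (by rw [mul_one]; exact h0)
    have hcs := Real.cos_sub (4 * p.2) (Real.pi / 2)
    rw [Real.cos_pi_div_two, Real.sin_pi_div_two] at hcs
    have hs : Real.sin (4 * p.2) = 0 := by
      have : γ * Real.sin (4 * p.2) = 0 := by rw [← h1, hcs]; ring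
      rcases mul_eq_zero.mp this with h | h
      · exact absurd h hγ
      · exact h
    obtain ⟨n, hn⟩ := (Real.cos_eq_one_iff _).mp hc
    exact hp2 ⟨n, by push_cast; linarith⟩
  subst hα; subst hγ
  intro z
  have := hu z.1 z.2
  simpa using this
end
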